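/- If a multigraph G is not Mengerian for time, then any multigraph obtained from G by m-subdividing one of its multiedges is not Mengerian for time. -/

import Mathlib

/-- A (finite, loopless) multigraph: a vertex type, an edge type, and an
endpoints function assigning to each edge an unordered pair of distinct vertices. -/
structure Multigraph where
  V : Type
  E : Type
  fintypeV : Fintype V
  decEqV : DecidableEq V
  fintypeE : Fintype E
  decEqE : DecidableEq E
  ends : E → Sym2 V
  loopless : ∀ e, ¬ (ends e).IsDiag

attribute [instance] Multigraph.fintypeV Multigraph.decEqV Multigraph.fintypeE Multigraph.decEqE

/-- A temporal `s,z`-path in the temporal graph `(G, lam)`: an alternating sequence of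
pairwise distinct vertices and edges, starting at `s`, ending at `z`, whose edges appear
at non-decreasing timesteps. -/
structure TPath (G : Multigraph) (lam : G.E → ℕ) (s z : G.V) where
  verts : List G.V
  edges : List G.E
  len_eq : verts.length = edges.length + 1
  head_eq : verts.head? = some s
  last_eq : verts.getLast? = some z
  nodup : verts.Nodup
  ends_eq : ∀ (i : ℕ) (h : i < edges.length),
      G.ends (edges.get ⟨i, h⟩) = s(verts.get ⟨i, by omega⟩, verts.get ⟨i + 1, by omega⟩)
  mono : List.Chain' (· ≤ ·) (edges.map lam)

/-- The set of timesteps at which a temporal path is active. -/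
def TPath.times {G : Multigraph} {lam : G.E → ℕ} {s z : G.V} (P : TPath G lam s z) : Set ℕ :=
  {t | ∃ e ∈ P.edges, lam e = t}

/-- Two temporal `s,z`-paths are snapshot disjoint if they are not both active at any
common timestep. -/
def SnapDisjoint {G : Multigraph} {lam : G.E → ℕ} {s z : G.V} (P Q : TPath G lam s z) : Prop :=
  P.times ∩ Q.times = ∅

/-- A set `S` of timesteps is a snapshot `s,z`-cut if every temporal `s,z`-path uses an
edge active at some timestep in `S`. -/
def IsSnapCut (G : Multigraph) (lam : G.E → ℕ) (s z : G.V) (S : Set ℕ) : Prop :=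
  ∀ P : TPath G lam s z, ∃ e ∈ P.edges, lam e ∈ S

/-- `maxD G lam s z`: the maximum number of pairwise snapshot disjoint temporal `s,z`-paths. -/
noncomputable def maxD (G : Multigraph) (lam : G.E → ℕ) (s z : G.V) : ℕ :=
  sSup {k | ∃ f : Fin k → TPath G lam s z, ∀ i j, i ≠ j → SnapDisjoint (f i) (f j)}

/-- `minC G lam s z`: the minimum size of a snapshot `s,z`-cut. -/
noncomputable def minC (G : Multigraph) (lam : G.E → ℕ) (s z : G.V) : ℕ :=
  sInf {h | ∃ S : Finset ℕ, S.card = h ∧ IsSnapCut G lam s z ↑S}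

/-- A proper timefunction: each edge is active at a positive timestep, and no two parallel
edges are active at the same timestep. -/
def ProperTime (G : Multigraph) (lam : G.E → ℕ) : Prop :=
  (∀ e, 0 < lam e) ∧ ∀ e f, e ≠ f → G.ends e = G.ends f → lam e ≠ lam f

/-- `G` is Mengerian for time: for every proper timefunction and every pair of distinct
vertices, the maximum number of pairwise snapshot disjoint temporal `s,z`-paths equals the
minimum size of a snapshot `s,z`-cut. -/
def Mengerian (G : Multigraph) : Prop :=
  ∀ lam : G.E → ℕ, ProperTime G lam → ∀ s z : G.V, s ≠ z →
    maxD G lam s z = minC G lam s z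

/-- `H` is a subgraph of `G` (up to isomorphism): `H` embeds into `G`. -/
def IsSubgraph (H G : Multigraph) : Prop :=
  ∃ (fv : H.V → G.V) (fe : H.E → G.E),
    Function.Injective fv ∧ Function.Injective fe ∧
    ∀ e, G.ends (fe e) = (H.ends e).map fv

/-- The m-subdivision of the multiedge `xy` of `G`: delete all edges between `x` and `y`,
add a new vertex (`none`), and join it to each of `x` and `y` by as many parallel edges as
there were between `x` and `y`. -/
def Multigraph.msubdiv (G : Multigraph) (x y : G.V) : Multigraph where
  V := Option G.V
  E := {e : G.E // G.ends e ≠ s(x, y)} ⊕ ({e : G.E // G.ends e = s(x, y)} × Bool)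
  fintypeV := inferInstance
  decEqV := inferInstance
  fintypeE := inferInstance
  decEqE := inferInstance
  ends := fun t =>
    match t with
    | .inl e => (G.ends e.1).map some
    | .inr (_, true) => s(some x, (none : Option G.V))
    | .inr (_, false) => s((none : Option G.V), some y)
  loopless := by
    rintro (⟨e, he⟩ | ⟨e, b⟩)
    · simpa [Sym2.isDiag_map (Option.some_injective _)] using G.loopless e
    · cases b <;> simp [Sym2.mk_isDiag_iff]

/-- Isomorphism of multigraphs. -/
def MIso (G H : Multigraph) : Prop :=
  ∃ (fv : G.V ≃ H.V) (fe : G.E ≃ H.E), ∀ e, H.ends (fe e) = (G.ends e).map fv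

/-- `B` is obtained from `A` by m-subdividing one of its multiedges. -/
def SubdivStep (A B : Multigraph) : Prop :=
  ∃ x y : A.V, (∃ e, A.ends e = s(x, y)) ∧ MIso (A.msubdiv x y) B

/-- `H` is an m-topological minor of `G`: some subgraph of `G` can be obtained from `H` by
a sequence of m-subdivisions. -/
def IsMTopMinor (H G : Multigraph) : Prop :=
  ∃ K, Relation.ReflTransGen SubdivStep H K ∧ IsSubgraph K G

/-- The multigraph obtained from `G` by keeping only the edges satisfying `P`. -/
def Multigraph.restrictE (G : Multigraph) (P : G.E → Prop) [DecidablePred P] : Multigraph where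
  V := G.V
  E := {e : G.E // P e}
  fintypeV := G.fintypeV
  decEqV := G.decEqV
  fintypeE := inferInstance
  decEqE := inferInstance
  ends := fun e => G.ends e.1
  loopless := fun e => G.loopless e.1

/-- The underlying simple graph of a multigraph. -/
def Multigraph.simple (G : Multigraph) : SimpleGraph G.V where
  Adj u v := ∃ e, G.ends e = s(u, v)
  symm := by
    constructor
    rintro u v ⟨e, he⟩
    exact ⟨e, by rw [he, Sym2.eq_swap]⟩
  loopless := by
    constructor
    rintro u ⟨e, he⟩
    exact G.loopless e (by rw [he]; exact Sym2.mk_isDiag_iff.2 rfl)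

/-!
Give both halves of a subdivided edge the timestep of the edge they replace; this keeps the
timefunction proper. A temporal path of `G` through the multiedge `xy` then expands to one of
the subdivision through the new vertex, and conversely a temporal path of the subdivision
contracts to one of `G` by replacing its two half-edges at the new vertex with the original
edge of either one (both originals join `x` and `y`). Each operation only uses timesteps of
the path it starts from, and `maxD` and `minC` are monotone under replacing every path by one
active at fewer timesteps, so both agree on `G` and on its subdivision (and are invariant under
isomorphism). A witness that `G` is not Mengerian is therefore a witness for `H`.
-/

/-- `TWalk G lam t v z vs es`: a walk from `v` to `z` with vertex list `vs` and edge list `es`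
whose edges are active at non-decreasing timesteps, all at least `t`. -/
inductive TWalk (G : Multigraph) (lam : G.E → ℕ) : ℕ → G.V → G.V → List G.V → List G.E → Prop
  | nil (t : ℕ) (v : G.V) : TWalk G lam t v v [v] []
  | cons {t : ℕ} {v w z : G.V} {vs : List G.V} {es : List G.E} (e : G.E)
      (hends : G.ends e = s(v, w)) (ht : t ≤ lam e) (hw : TWalk G lam (lam e) w z vs es) :
      TWalk G lam t v z (v :: vs) (e :: es)

namespace TWalk

variable {G : Multigraph} {lam : G.E → ℕ} {t : ℕ} {v z : G.V} {vs : List G.V} {es : List G.E}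

lemma exists_eq_cons (hw : TWalk G lam t v z vs es) : ∃ l, vs = v :: l := by
  cases hw <;> exact ⟨_, rfl⟩

lemma mono {t' : ℕ} (h : t' ≤ t) (hw : TWalk G lam t v z vs es) : TWalk G lam t' v z vs es := by
  cases hw with
  | nil => exact .nil _ _
  | cons e hends ht hw => exact .cons e hends (h.trans ht) hw

lemma length_eq (hw : TWalk G lam t v z vs es) : vs.length = es.length + 1 := by
  induction hw with
  | nil => rfl
  | cons _ _ _ _ ih => simp [ih]

lemma getLast?_eq (hw : TWalk G lam t v z vs es) : vs.getLast? = some z := by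
  induction hw with
  | nil => rfl
  | cons _ _ _ hw ih =>
    obtain ⟨l, rfl⟩ := hw.exists_eq_cons
    rwa [List.getLast?_cons_cons]

lemma ends_getElem (hw : TWalk G lam t v z vs es) (i : ℕ) (hi : i < es.length)
    (hi₁ : i + 1 < vs.length) : G.ends es[i] = s(vs[i], vs[i + 1]) := by
  induction hw generalizing i with
  | nil => simp at hi
  | cons e hends _ hw ih =>
    obtain ⟨l, rfl⟩ := hw.exists_eq_cons
    cases i with
    | zero => exact hends
    | succ i => exact ih i (by simpa using hi) (by simpa using hi₁)

lemma isChain (hw : TWalk G lam t v z vs es) : (t :: es.map lam).IsChain (· ≤ ·) := by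
  induction hw with
  | nil => exact .singleton _
  | cons e _ ht _ ih => exact List.IsChain.cons_cons ht ih

lemma of_isChain : ∀ {t : ℕ} {v : G.V} {vs : List G.V} {es : List G.E},
    vs.length = es.length + 1 → vs.head? = some v → vs.getLast? = some z →
    (∀ (i : ℕ) (hi : i < es.length) (hi₁ : i + 1 < vs.length),
      G.ends es[i] = s(vs[i], vs[i + 1])) →
    (t :: es.map lam).IsChain (· ≤ ·) → TWalk G lam t v z vs es
  | t, v, [a], [], _, hhead, hlast, _, _ => by
    cases hhead; cases hlast; exact .nil t v
  | t, v, a :: b :: vs, e :: es, hlen, hhead, hlast, hends, hchain => by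
    cases hhead
    rw [List.map_cons, List.isChain_cons_cons] at hchain
    refine .cons e (hends 0 (by simp) (by simp)) hchain.1 (of_isChain (by simpa using hlen) rfl
      (by rwa [List.getLast?_cons_cons] at hlast) (fun i hi hi₁ => ?_) hchain.2)
    exact hends (i + 1) (by simpa using hi) (by simpa using hi₁)
  | _, _, [], _, hlen, _, _, _, _ | _, _, [_], _ :: _, hlen, _, _, _, _
  | _, _, _ :: _ :: _, [], hlen, _, _, _, _ => by simp at hlen

lemma map {G H : Multigraph} {lam : G.E → ℕ} {lamH : H.E → ℕ} {fv : G.V → H.V}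
    {fe : G.E → H.E} (hends : ∀ e, H.ends (fe e) = (G.ends e).map fv)
    (hlam : ∀ e, lamH (fe e) = lam e) {t : ℕ} {v z : G.V} {vs : List G.V} {es : List G.E}
    (hw : TWalk G lam t v z vs es) :
    TWalk H lamH t (fv v) (fv z) (vs.map fv) (es.map fe) := by
  induction hw with
  | nil t v => exact .nil t (fv v)
  | cons e he ht _ ih =>
    exact .cons (fe e) (by rw [hends, he, Sym2.map_mk]) (by rwa [hlam])
      (by rwa [hlam])

end TWalk

def TWalk.toTPath {G : Multigraph} {lam : G.E → ℕ} {t : ℕ} {s z : G.V} {vs : List G.V}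
    {es : List G.E} (hw : TWalk G lam t s z vs es) (hnd : vs.Nodup) : TPath G lam s z where
  verts := vs
  edges := es
  len_eq := hw.length_eq
  head_eq := by obtain ⟨l, rfl⟩ := hw.exists_eq_cons; rfl
  last_eq := hw.getLast?_eq
  nodup := hnd
  ends_eq i hi := by simpa using hw.ends_getElem i hi (by have := hw.length_eq; omega)
  mono := (List.isChain_cons.1 hw.isChain).2

lemma TPath.twalk {G : Multigraph} {lam : G.E → ℕ} {s z : G.V} (P : TPath G lam s z) :
    TWalk G lam 0 s z P.verts P.edges :=
  TWalk.of_isChain P.len_eq P.head_eq P.last_eq (fun i hi _ => by simpa using P.ends_eq i hi)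
    (List.isChain_cons.2 ⟨fun _ _ => Nat.zero_le _, P.mono⟩)

lemma Sym2.none_notMem_map_some {V : Type*} (z : Sym2 V) : none ∉ z.map some := by
  simp [Sym2.mem_map]

namespace Multigraph

variable (G : Multigraph) (x y : G.V)

def msubdivParent : (G.msubdiv x y).E → G.E
  | .inl e => e.1
  | .inr (e, _) => e.1

variable {G x y}

lemma ne_of_ends_eq {e : G.E} {v w : G.V} (he : G.ends e = s(v, w)) : v ≠ w := by
  rintro rfl
  exact G.loopless e (he ▸ Sym2.mk_isDiag_iff.2 rfl)

lemma msubdivParent_ends_of_some_some {e : (G.msubdiv x y).E} {v w : G.V}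
    (he : (G.msubdiv x y).ends e = s(some v, some w)) :
    G.ends (G.msubdivParent x y e) = s(v, w) := by
  rcases e with e | ⟨e, _ | _⟩
  · exact Sym2.map.injective (Option.some_injective _) he
  all_goals simp [msubdiv] at he

lemma msubdivParent_ends_of_some_none {e : (G.msubdiv x y).E} {v : G.V}
    (he : (G.msubdiv x y).ends e = s(some v, none)) :
    G.ends (G.msubdivParent x y e) = s(x, y) ∧ (v = x ∨ v = y) := by
  rcases e with e | ⟨⟨e, he'⟩, _ | _⟩
  · refine absurd ?_ (Sym2.none_notMem_map_some (G.ends e.1))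
    rw [show (G.ends e.1).map some = _ from he]
    exact Sym2.mem_mk_right _ _
  all_goals simp only [msubdiv, Sym2.eq_iff] at he; simp_all [msubdivParent]

lemma exists_msubdiv_halves {e : G.E} {v w : G.V} (he : G.ends e = s(v, w))
    (hxy : s(v, w) = s(x, y)) :
    ∃ e₁ e₂ : (G.msubdiv x y).E, (G.msubdiv x y).ends e₁ = s(some v, none) ∧
      (G.msubdiv x y).ends e₂ = s(none, some w) ∧
      G.msubdivParent x y e₁ = e ∧ G.msubdivParent x y e₂ = e := by
  rcases Sym2.eq_iff.1 hxy with ⟨rfl, rfl⟩ | ⟨rfl, rfl⟩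
  · exact ⟨.inr (⟨e, he⟩, true), .inr (⟨e, he⟩, false), rfl, rfl, rfl, rfl⟩
  · exact ⟨.inr (⟨e, he.trans Sym2.eq_swap⟩, false), .inr (⟨e, he.trans Sym2.eq_swap⟩, true),
      Sym2.eq_swap, Sym2.eq_swap, rfl, rfl⟩

end Multigraph

lemma ProperTime.comp_msubdivParent {G : Multigraph} {lam : G.E → ℕ} {x y : G.V} (hxy : x ≠ y)
    (hlam : ProperTime G lam) :
    ProperTime (G.msubdiv x y) (lam ∘ G.msubdivParent x y) := by
  refine ⟨fun e => hlam.1 _, ?_⟩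
  rintro (e | ⟨e, _ | _⟩) (f | ⟨f, _ | _⟩) hne hends
  case inl.inl =>
    exact hlam.2 _ _ (fun h => hne (by rw [Subtype.ext h]))
      (Sym2.map.injective (Option.some_injective _) hends)
  case inr.false.inr.false | inr.true.inr.true =>
    exact hlam.2 _ _ (fun h => hne (by rw [Subtype.ext h])) (e.2.trans f.2.symm)
  case inr.false.inr.true | inr.true.inr.false =>
    simp [Multigraph.msubdiv, hxy, hxy.symm] at hends
  case inl.inr.false | inl.inr.true =>
    refine absurd ?_ (Sym2.none_notMem_map_some (G.ends e.1))
    rw [show (G.ends e.1).map some = _ from hends]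
    simp [Multigraph.msubdiv]
  case inr.false.inl | inr.true.inl =>
    refine absurd ?_ (Sym2.none_notMem_map_some (G.ends f.1))
    rw [show (G.ends f.1).map some = _ from hends.symm]
    simp [Multigraph.msubdiv]

namespace TWalk

open Multigraph

variable {G : Multigraph} {x y : G.V} {lam : G.E → ℕ}

lemma exists_msubdiv {t : ℕ} {v z : G.V} {vs : List G.V} {es : List G.E}
    (hw : TWalk G lam t v z vs es) :
    ∃ (vs' : List (Option G.V)) (es' : List (G.msubdiv x y).E),
      TWalk (G.msubdiv x y) (lam ∘ G.msubdivParent x y) t (some v) (some z) vs' es' ∧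
      vs'.filterMap id = vs ∧ (none ∈ vs' → x ∈ vs ∧ y ∈ vs) ∧ (vs.Nodup → vs'.Nodup) ∧
      es'.map (G.msubdivParent x y) ⊆ es := by
  induction hw with
  | nil t v =>
    exact ⟨[some v], [], .nil _ _, rfl, by simp, fun _ => List.nodup_singleton _, by simp⟩
  | @cons t v w z vs es e hends ht _ ih =>
    obtain ⟨vs', es', hw', hfm, hnone, hnd, hsub⟩ := ih
    obtain ⟨l, rfl⟩ := hw'.exists_eq_cons
    have hv : some v ∈ some w :: l → v ∈ vs := fun h => hfm ▸ List.mem_filterMap.2 ⟨_, h, rfl⟩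
    by_cases hxy : s(v, w) = s(x, y)
    · obtain ⟨e₁, e₂, he₁, he₂, hp₁, hp₂⟩ := exists_msubdiv_halves hends hxy
      refine ⟨some v :: none :: some w :: l, e₁ :: e₂ :: es', .cons e₁ he₁ (by simpa [hp₁])
        (.cons e₂ he₂ (by simp [hp₁, hp₂]) (by rwa [Function.comp_apply, hp₂])),
        hfm ▸ rfl, ?_, ?_, ?_⟩
      · obtain ⟨l', rfl⟩ : ∃ l', vs = w :: l' := ⟨_, hfm.symm⟩
        rcases Sym2.eq_iff.1 hxy with ⟨rfl, rfl⟩ | ⟨rfl, rfl⟩ <;> simp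
      · intro hnd'
        rw [List.nodup_cons] at hnd'
        refine List.nodup_cons.2 ⟨by simpa using fun h => hnd'.1 (hv h), List.nodup_cons.2
          ⟨fun h => hnd'.1 ?_, hnd hnd'.2⟩⟩
        rcases Sym2.eq_iff.1 hxy with ⟨rfl, rfl⟩ | ⟨rfl, rfl⟩
        exacts [(hnone h).1, (hnone h).2]
      · simp only [List.map_cons, hp₁, hp₂]
        exact List.cons_subset.2 ⟨List.mem_cons_self, List.cons_subset.2
          ⟨List.mem_cons_self, List.subset_cons_of_subset _ hsub⟩⟩
    · refine ⟨some v :: some w :: l, .inl ⟨e, hends ▸ hxy⟩ :: es',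
        .cons _ (by simp [msubdiv, hends]) ht hw', hfm ▸ rfl, ?_, ?_, ?_⟩
      · intro h
        obtain ⟨hx, hy⟩ := hnone ((List.mem_cons.1 h).resolve_left (by simp))
        exact ⟨List.mem_cons_of_mem _ hx, List.mem_cons_of_mem _ hy⟩
      · intro hnd'
        rw [List.nodup_cons] at hnd'
        exact List.nodup_cons.2 ⟨fun h => hnd'.1 (hv h), hnd hnd'.2⟩
      · exact List.cons_subset_cons _ hsub

/-- The second alternative in `hu`, a walk starting at the new vertex entered from `u`, is what
lets the induction step through the new vertex. -/
lemma exists_of_msubdiv {t : ℕ} {a b : (G.msubdiv x y).V} {vs' : List (G.msubdiv x y).V}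
    {es' : List (G.msubdiv x y).E}
    (hw : TWalk (G.msubdiv x y) (lam ∘ G.msubdivParent x y) t a b vs' es') (hnd : vs'.Nodup)
    {z : G.V} (hb : b = some z) (u : G.V)
    (hu : a = some u ∨ (a = none ∧ (u = x ∨ u = y) ∧ some u ∉ vs')) :
    ∃ (vs : List G.V) (es : List G.E), TWalk G lam t u z vs es ∧
      vs = u :: vs'.tail.filterMap id ∧ es ⊆ es'.map (G.msubdivParent x y) := by
  revert u
  induction hw with
  | nil t a =>
    intro u hu
    subst hb
    obtain hu | ⟨hu, -⟩ := hu
    · cases hu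
      exact ⟨[z], [], .nil t z, rfl, List.nil_subset _⟩
    · cases hu
  | @cons t a w b vs es e hends ht hw ih =>
    intro u hu
    obtain ⟨l, rfl⟩ := hw.exists_eq_cons
    have hnd' := hnd.of_cons
    obtain rfl | ⟨rfl, hux, hu⟩ := hu <;> rcases w with _ | w
    · obtain ⟨-, hux⟩ := msubdivParent_ends_of_some_none hends
      obtain ⟨vs, es, hw, hvs, hsub⟩ := ih hnd' hb u (Or.inr ⟨rfl, hux, (List.nodup_cons.1 hnd).1⟩)
      exact ⟨vs, es, hw.mono ht, hvs, List.subset_cons_of_subset _ hsub⟩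
    · obtain ⟨vs, es, hw, rfl, hsub⟩ := ih hnd' hb w (Or.inl rfl)
      exact ⟨_, _, .cons _ (msubdivParent_ends_of_some_some hends) ht hw, rfl,
        List.cons_subset_cons _ hsub⟩
    · exact absurd hends ((G.msubdiv x y).ne_of_ends_eq · rfl)
    · obtain ⟨hxy, hwx⟩ := msubdivParent_ends_of_some_none (hends.trans Sym2.eq_swap)
      have huw : u ≠ w := by rintro rfl; exact hu (List.mem_cons_of_mem _ List.mem_cons_self)
      have hends' : G.ends (G.msubdivParent x y e) = s(u, w) :=
        hxy.trans (Sym2.eq_of_ne_mem huw (Sym2.mem_iff.2 hux) (Sym2.mem_iff.2 hwx)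
          (Sym2.mem_mk_left _ _) (Sym2.mem_mk_right _ _))
      obtain ⟨vs, es, hw, rfl, hsub⟩ := ih hnd' hb w (Or.inl rfl)
      exact ⟨_, _, .cons _ hends' ht hw, rfl, List.cons_subset_cons _ hsub⟩

end TWalk

namespace TPath

variable {G : Multigraph} {lam : G.E → ℕ} {s z : G.V}

lemma exists_mem_edges (hsz : s ≠ z) (P : TPath G lam s z) : ∃ e, e ∈ P.edges := by
  have hw := P.twalk
  generalize P.verts = vs at hw
  generalize P.edges = es at hw ⊢
  cases hw with
  | nil => exact absurd rfl hsz
  | cons e => exact ⟨e, List.mem_cons_self⟩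

lemma exists_map {H : Multigraph} {lamH : H.E → ℕ} {fv : G.V → H.V} {fe : G.E → H.E}
    (hfv : Function.Injective fv) (hends : ∀ e, H.ends (fe e) = (G.ends e).map fv)
    (hlam : ∀ e, lamH (fe e) = lam e) {s' z' : H.V} (hs : fv s = s') (hz : fv z = z')
    (P : TPath G lam s z) : ∃ Q : TPath H lamH s' z', Q.times ⊆ P.times := by
  subst hs hz
  refine ⟨(P.twalk.map hends hlam).toTPath (P.nodup.map hfv), ?_⟩
  rintro _ ⟨e', he', rfl⟩
  obtain ⟨e, he, rfl⟩ := List.mem_map.1 he'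
  exact ⟨e, he, (hlam e).symm⟩

variable {x y : G.V}

lemma exists_msubdiv (P : TPath G lam s z) :
    ∃ Q : TPath (G.msubdiv x y) (lam ∘ G.msubdivParent x y) (some s) (some z),
      Q.times ⊆ P.times := by
  obtain ⟨vs', es', hw, -, -, hnd, hsub⟩ := P.twalk.exists_msubdiv (x := x) (y := y)
  refine ⟨hw.toTPath (hnd P.nodup), ?_⟩
  rintro _ ⟨e', he', rfl⟩
  exact ⟨_, hsub (List.mem_map_of_mem he'), rfl⟩

lemma exists_of_msubdiv (Q : TPath (G.msubdiv x y) (lam ∘ G.msubdivParent x y) (some s) (some z)) :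
    ∃ P : TPath G lam s z, P.times ⊆ Q.times := by
  obtain ⟨vs, es, hw, hvs, hsub⟩ := Q.twalk.exists_of_msubdiv Q.nodup rfl s (Or.inl rfl)
  have hnd : (Q.verts.filterMap id).Nodup :=
    Q.nodup.filterMap fun _ _ _ h h' => (Option.mem_def.1 h).trans (Option.mem_def.1 h').symm
  obtain ⟨l, hl⟩ := Q.twalk.exists_eq_cons
  rw [hl] at hvs hnd
  refine ⟨hw.toTPath (by rw [hvs]; exact hnd), ?_⟩
  rintro _ ⟨e, he, rfl⟩
  obtain ⟨e', he', rfl⟩ := List.mem_map.1 (hsub he)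
  exact ⟨e', he', rfl⟩

end TPath

section Comparison

variable {G G' : Multigraph} {lam : G.E → ℕ} {lam' : G'.E → ℕ} {s z : G.V} {s' z' : G'.V}

lemma bddAbove_snapDisjoint_families (hsz : s ≠ z) :
    BddAbove {k | ∃ f : Fin k → TPath G lam s z, ∀ i j, i ≠ j → SnapDisjoint (f i) (f j)} := by
  refine ⟨Fintype.card G.E, ?_⟩
  rintro k ⟨f, hf⟩
  choose g hg using fun i => (f i).exists_mem_edges hsz
  have hg_inj : Function.Injective g := by
    intro i j hij
    by_contra hne
    have : lam (g i) ∈ (f i).times ∩ (f j).times := ⟨⟨g i, hg i, rfl⟩, ⟨g j, hg j, by rw [hij]⟩⟩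
    rwa [hf i j hne] at this
  simpa using Fintype.card_le_of_injective g hg_inj

lemma maxD_le_of_forall_exists_times_subset (hsz' : s' ≠ z')
    (h : ∀ P : TPath G lam s z, ∃ Q : TPath G' lam' s' z', Q.times ⊆ P.times) :
    maxD G lam s z ≤ maxD G' lam' s' z' := by
  choose F hF using h
  refine csSup_le_csSup (bddAbove_snapDisjoint_families hsz') ⟨0, Fin.elim0, fun i => i.elim0⟩ ?_
  rintro k ⟨f, hf⟩
  refine ⟨fun i => F (f i), fun i j hij => Set.subset_empty_iff.1 ?_⟩
  exact hf i j hij ▸ Set.inter_subset_inter (hF _) (hF _)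

lemma minC_le_of_forall_exists_times_subset (hsz' : s' ≠ z')
    (h : ∀ P : TPath G lam s z, ∃ Q : TPath G' lam' s' z', Q.times ⊆ P.times) :
    minC G lam s z ≤ minC G' lam' s' z' := by
  have hcut : IsSnapCut G' lam' s' z' ↑(Finset.univ.image lam') := fun Q => by
    obtain ⟨e, he⟩ := Q.exists_mem_edges hsz'
    exact ⟨e, he, by simp⟩
  refine Nat.sInf_le ?_
  obtain ⟨S, hS, hSC⟩ := Nat.sInf_mem (s := {h | ∃ S : Finset ℕ, S.card = h ∧
    IsSnapCut G' lam' s' z' ↑S}) ⟨_, _, rfl, hcut⟩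
  refine ⟨S, hS, fun P => ?_⟩
  obtain ⟨Q, hQ⟩ := h P
  obtain ⟨e', he', hmem⟩ := hSC Q
  obtain ⟨e, he, heq⟩ := hQ ⟨e', he', rfl⟩
  exact ⟨e, he, heq ▸ hmem⟩

lemma maxD_eq_minC_iff_of_forall_exists_times_subset (hsz : s ≠ z) (hsz' : s' ≠ z')
    (h : ∀ P : TPath G lam s z, ∃ Q : TPath G' lam' s' z', Q.times ⊆ P.times)
    (h' : ∀ Q : TPath G' lam' s' z', ∃ P : TPath G lam s z, P.times ⊆ Q.times) :
    maxD G lam s z = minC G lam s z ↔ maxD G' lam' s' z' = minC G' lam' s' z' := by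
  rw [le_antisymm (maxD_le_of_forall_exists_times_subset hsz' h)
      (maxD_le_of_forall_exists_times_subset hsz h'),
    le_antisymm (minC_le_of_forall_exists_times_subset hsz' h)
      (minC_le_of_forall_exists_times_subset hsz h')]

end Comparison

lemma ProperTime.comp {G H : Multigraph} {lam : G.E → ℕ} (hlam : ProperTime G lam)
    {fv : H.V → G.V} {fe : H.E → G.E} (hfe : Function.Injective fe)
    (hends : ∀ e, G.ends (fe e) = (H.ends e).map fv) : ProperTime H (lam ∘ fe) :=
  ⟨fun _ => hlam.1 _, fun e f hne h => hlam.2 _ _ (hfe.ne hne) (by rw [hends, hends, h])⟩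

namespace Mengerian

lemma of_miso {G H : Multigraph} (hGH : MIso G H) (hH : Mengerian H) : Mengerian G := by
  obtain ⟨fv, fe, hends⟩ := hGH
  have hends' (e : H.E) : G.ends (fe.symm e) = (H.ends e).map fv.symm := by
    rw [← fe.apply_symm_apply e, hends, Sym2.map_map, fe.symm_apply_apply]
    simp
  intro lam hlam s z hsz
  have hsz' : fv s ≠ fv z := fv.injective.ne hsz
  rw [maxD_eq_minC_iff_of_forall_exists_times_subset (lam' := lam ∘ fe.symm) hsz hsz'
    (fun P => P.exists_map fv.injective hends (fun e => by simp) rfl rfl)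
    (fun Q => Q.exists_map fv.symm.injective hends' (fun _ => rfl) (by simp) (by simp))]
  exact hH _ (ProperTime.comp hlam fe.symm.injective hends') _ _ hsz'

lemma of_msubdiv {G : Multigraph} {x y : G.V} (hxy : x ≠ y) (h : Mengerian (G.msubdiv x y)) :
    Mengerian G := by
  intro lam hlam s z hsz
  have hsz' : (some s : (G.msubdiv x y).V) ≠ some z := (Option.some_injective _).ne hsz
  rw [maxD_eq_minC_iff_of_forall_exists_times_subset hsz hsz' TPath.exists_msubdiv
    TPath.exists_of_msubdiv]
  exact h _ (ProperTime.comp_msubdivParent hxy hlam) _ _ hsz'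

end Mengerian

/-- if `G` is not Mengerian for time, then any multigraph obtained from `G`
by m-subdividing one of its multiedges is not Mengerian for time. -/
theorem stmt1 (G H : Multigraph) (hstep : SubdivStep G H) (hG : ¬ Mengerian G) :
    ¬ Mengerian H := by
  obtain ⟨x, y, ⟨e, he⟩, hGH⟩ := hstep
  exact fun hH => hG ((hH.of_miso hGH).of_msubdiv (G.ne_of_ends_eq he))
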